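/- Trivial MBO dynamics for large τ: on a connected graph, let S ⊂ V with R_S = vol S / vol V ≠ 1/2. If τ > (1/λ₂)·log( (vol S)^{1/2}(vol S^c)^{1/2} / ((vol V)^{1/2}·|R_S − 1/2|·d₋^{r/2}) ), then thresholding e^{−τΔ}χ_S at 1/2 yields χ_V if R_S > 1/2 and yields 0 if R_S < 1/2. -/

import Mathlib

/-!
The heat flow `u' = -Δu` preserves the `d^r`-weighted mass, so `u t - R_S` keeps weighted mean
zero, and the spectral gap then makes the weighted energy `∑ d_i^r (u_i - R_S)²` decay like
`e^{-2λ₂t}` (Grönwall). The energy starts at `vol S · vol Sᶜ / vol V`, and every vertex has weight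
at least `d₋^r`, so once the energy drops below `d₋^r |R_S - 1/2|²` each `u_i` is closer to `R_S`
than `1/2` is. The bound on `τ` says exactly that the energy has dropped this far by time `τ`;
it also forces `τ ≥ 0`, because `d₋^r ≤ min (vol S, vol Sᶜ)`.
-/

open Finset

/-- The indicator function of a vertex set `S`. -/
noncomputable def chi {V : Type*} [DecidableEq V] (S : Finset V) : V → ℝ :=
  fun i => if i ∈ S then 1 else 0

open Real

noncomputable def graphLaplacian {V : Type*} [Fintype V] (ω : V → V → ℝ) (d : V → ℝ) (r : ℝ)
    (w : V → ℝ) (i : V) : ℝ :=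
  d i ^ (-r) * ∑ j, ω i j * (w i - w j)

def HasSpectralGap {V : Type*} [Fintype V] (ω : V → V → ℝ) (d : V → ℝ) (r lam2 : ℝ) : Prop :=
  ∀ w : V → ℝ, (∑ i, d i ^ r * w i) = 0 →
    lam2 * (∑ i, d i ^ r * w i ^ 2) ≤ (1/2) * ∑ i, ∑ j, ω i j * (w i - w j) ^ 2

def IsHeatFlow {V : Type*} [Fintype V] (ω : V → V → ℝ) (d : V → ℝ) (r : ℝ)
    (u : ℝ → V → ℝ) : Prop :=
  ∀ t i, HasDerivAt (fun s => u s i) (-graphLaplacian ω d r (u t) i) t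

section GraphLaplacian

variable {V : Type*} [Fintype V] {ω : V → V → ℝ} {d : V → ℝ} {r : ℝ}

theorem two_mul_sum_mul_sum_sub (hsym : ∀ i j, ω i j = ω j i) (v w : V → ℝ) :
    2 * ∑ i, v i * ∑ j, ω i j * (w i - w j) =
      ∑ i, ∑ j, ω i j * (v i - v j) * (w i - w j) := by
  have hswap : ∑ i, ∑ j, ω i j * (v j * (w j - w i)) =
      ∑ i, ∑ j, ω i j * (v i * (w i - w j)) := by
    rw [sum_comm]
    exact sum_congr rfl fun i _ => sum_congr rfl fun j _ => by rw [hsym]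
  calc 2 * ∑ i, v i * ∑ j, ω i j * (w i - w j)
      = ∑ i, ∑ j, ω i j * (v i * (w i - w j)) +
          ∑ i, ∑ j, ω i j * (v j * (w j - w i)) := by
        rw [hswap, ← two_mul]
        simp only [mul_sum, mul_left_comm (v _)]
    _ = ∑ i, ∑ j, ω i j * (v i - v j) * (w i - w j) := by
        rw [← sum_add_distrib]
        refine sum_congr rfl fun i _ => ?_
        rw [← sum_add_distrib]
        exact sum_congr rfl fun j _ => by ring

theorem rpow_mul_graphLaplacian {i : V} (hd : 0 < d i) (w : V → ℝ) :
    d i ^ r * graphLaplacian ω d r w i = ∑ j, ω i j * (w i - w j) := by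
  rw [graphLaplacian, ← mul_assoc, ← rpow_add hd, add_neg_cancel, rpow_zero, one_mul]

theorem two_mul_sum_rpow_mul_graphLaplacian (hsym : ∀ i j, ω i j = ω j i)
    (hd : ∀ i, 0 < d i) (v w : V → ℝ) :
    2 * ∑ i, d i ^ r * (v i * graphLaplacian ω d r w i) =
      ∑ i, ∑ j, ω i j * (v i - v j) * (w i - w j) := by
  rw [← two_mul_sum_mul_sum_sub hsym]
  congr 1
  exact sum_congr rfl fun i _ => by rw [mul_left_comm, rpow_mul_graphLaplacian (hd i)]

theorem graphLaplacian_sub_const (w : V → ℝ) (c : ℝ) :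
    graphLaplacian ω d r (fun i => w i - c) = graphLaplacian ω d r w := by
  ext i
  simp only [graphLaplacian, sub_sub_sub_cancel_right]

end GraphLaplacian

section HeatFlow

variable {V : Type*} [Fintype V] {ω : V → V → ℝ} {d : V → ℝ} {r : ℝ} {u : ℝ → V → ℝ}

theorem IsHeatFlow.sub_const (hu : IsHeatFlow ω d r u) (c : ℝ) :
    IsHeatFlow ω d r fun t i => u t i - c := fun t i => by
  simpa only [graphLaplacian_sub_const] using (hu t i).sub_const c

theorem IsHeatFlow.sum_rpow_mul_eq (hsym : ∀ i j, ω i j = ω j i) (hd : ∀ i, 0 < d i)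
    (hu : IsHeatFlow ω d r u) (t : ℝ) :
    ∑ i, d i ^ r * u t i = ∑ i, d i ^ r * u 0 i := by
  have hderiv : ∀ t, HasDerivAt (fun s => ∑ i, d i ^ r * u s i) 0 t := fun t => by
    have hgreen := two_mul_sum_rpow_mul_graphLaplacian (r := r) hsym hd (fun _ => 1) (u t)
    simp only [one_mul, sub_self, mul_zero, zero_mul, sum_const_zero,
      mul_eq_zero, two_ne_zero, false_or] at hgreen
    refine (HasDerivAt.fun_sum fun i _ => (hu t i).const_mul (d i ^ r)).congr_deriv ?_
    simp only [mul_neg, sum_neg_distrib, hgreen, neg_zero]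
  exact is_const_of_deriv_eq_zero (fun s => (hderiv s).differentiableAt)
    (fun s => (hderiv s).deriv) t 0

theorem IsHeatFlow.hasDerivAt_energy (hu : IsHeatFlow ω d r u) (t : ℝ) :
    HasDerivAt (fun s => ∑ i, d i ^ r * u s i ^ 2)
      (-(2 * ∑ i, d i ^ r * (u t i * graphLaplacian ω d r (u t) i))) t := by
  refine (HasDerivAt.fun_sum fun i _ => ((hu t i).fun_pow 2).const_mul (d i ^ r)).congr_deriv ?_
  rw [mul_sum, ← sum_neg_distrib]
  exact sum_congr rfl fun i _ => by push_cast; ring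

theorem two_mul_sum_rpow_mul_sq_le (hsym : ∀ i j, ω i j = ω j i) (hd : ∀ i, 0 < d i)
    {lam2 : ℝ} (hgap : HasSpectralGap ω d r lam2)
    {w : V → ℝ} (hw : ∑ i, d i ^ r * w i = 0) :
    2 * lam2 * ∑ i, d i ^ r * w i ^ 2 ≤ 2 * ∑ i, d i ^ r * (w i * graphLaplacian ω d r w i) := by
  rw [two_mul_sum_rpow_mul_graphLaplacian hsym hd]
  simp only [mul_assoc, ← sq]
  linarith [hgap w hw]

theorem IsHeatFlow.energy_le_mul_exp (hsym : ∀ i j, ω i j = ω j i) (hd : ∀ i, 0 < d i)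
    {lam2 : ℝ} (hgap : HasSpectralGap ω d r lam2)
    (hu : IsHeatFlow ω d r u) (hu0 : ∑ i, d i ^ r * u 0 i = 0) {t : ℝ} (ht : 0 ≤ t) :
    ∑ i, d i ^ r * u t i ^ 2 ≤ (∑ i, d i ^ r * u 0 i ^ 2) * exp (-(2 * lam2) * t) := by
  have hmass : ∀ s, ∑ i, d i ^ r * u s i = 0 := fun s => (hu.sum_rpow_mul_eq hsym hd s).trans hu0
  have h := le_gronwallBound_of_liminf_deriv_right_le (ε := 0) (K := -(2 * lam2))
    (continuous_iff_continuousAt.2 fun s => (hu.hasDerivAt_energy s).continuousAt).continuousOn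
    (fun s _ _ hr => (hu.hasDerivAt_energy s).hasDerivWithinAt.liminf_right_slope_le hr) le_rfl
    (fun s _ => by linarith [two_mul_sum_rpow_mul_sq_le hsym hd hgap (hmass s)]) t ⟨ht, le_rfl⟩
  rwa [gronwallBound_ε0, sub_zero] at h

end HeatFlow

section VertexSets

variable {V : Type*} [Fintype V] [DecidableEq V]

theorem sum_mul_chi (f : V → ℝ) (S : Finset V) : ∑ i, f i * chi S i = ∑ i ∈ S, f i := by
  simp only [chi, mul_ite, mul_one, mul_zero, sum_ite_mem, univ_inter]

theorem sum_mul_chi_sub_sq (f : V → ℝ) (S : Finset V) (R : ℝ) :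
    ∑ i, f i * (chi S i - R) ^ 2 = (∑ i ∈ S, f i) * (1 - R) ^ 2 + (∑ i ∈ Sᶜ, f i) * R ^ 2 := by
  rw [← sum_add_sum_compl S, sum_mul, sum_mul]
  congr 1
  · exact sum_congr rfl fun i hi => by rw [chi, if_pos hi]
  · exact sum_congr rfl fun i hi => by rw [chi, if_neg (mem_compl.1 hi), zero_sub, neg_sq]

theorem sum_mul_chi_sub_div_eq_zero (f : V → ℝ) (S : Finset V)
    (hf : ∑ i ∈ S, f i + ∑ i ∈ Sᶜ, f i ≠ 0) :
    ∑ i, f i * (chi S i - (∑ i ∈ S, f i) / (∑ i ∈ S, f i + ∑ i ∈ Sᶜ, f i)) = 0 := by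
  simp only [mul_sub, sum_sub_distrib, sum_mul_chi, ← sum_mul]
  rw [sum_add_sum_compl] at hf ⊢
  rw [mul_div_cancel₀ _ hf, sub_self]

end VertexSets

section MinimumDegree

variable {V : Type*} [Fintype V] [Nonempty V] {d : V → ℝ} {r : ℝ}

theorem univ_inf'_pos (hd : ∀ i, 0 < d i) : 0 < univ.inf' univ_nonempty d :=
  (lt_inf'_iff _).2 fun i _ => hd i

theorem rpow_inf'_le (hd : ∀ i, 0 < d i) (hr : 0 ≤ r) (i : V) :
    (univ.inf' univ_nonempty d) ^ r ≤ d i ^ r :=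
  rpow_le_rpow (univ_inf'_pos hd).le (inf'_le d (mem_univ i)) hr

theorem rpow_inf'_le_sum (hd : ∀ i, 0 < d i) (hr : 0 ≤ r) {S : Finset V} (hS : S.Nonempty) :
    (univ.inf' univ_nonempty d) ^ r ≤ ∑ i ∈ S, d i ^ r :=
  let ⟨i, hi⟩ := hS
  (rpow_inf'_le hd hr i).trans (single_le_sum (fun i _ => (rpow_pos_of_pos (hd i) r).le) hi)

theorem sq_lt_of_sum_rpow_mul_sq_lt (hd : ∀ i, 0 < d i) (hr : 0 ≤ r) {w : V → ℝ} {C : ℝ}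
    (h : ∑ i, d i ^ r * w i ^ 2 < C * (univ.inf' univ_nonempty d) ^ r) (i : V) : w i ^ 2 < C := by
  have hle : (univ.inf' univ_nonempty d) ^ r * w i ^ 2 ≤ ∑ i, d i ^ r * w i ^ 2 :=
    (mul_le_mul_of_nonneg_right (rpow_inf'_le hd hr i) (sq_nonneg _)).trans
      (single_le_sum (f := fun i => d i ^ r * w i ^ 2)
        (fun j _ => mul_nonneg (rpow_pos_of_pos (hd j) r).le (sq_nonneg _)) (mem_univ i))
  exact lt_of_mul_lt_mul_left (by linarith) (rpow_pos_of_pos (univ_inf'_pos hd) r).le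

end MinimumDegree

theorem mul_one_sub_div_sq_add_mul_div_sq {a b : ℝ} (hab : a + b ≠ 0) :
    a * (1 - a / (a + b)) ^ 2 + b * (a / (a + b)) ^ 2 = a * b / (a + b) := by
  field_simp
  ring

theorem div_add_sub_half_sq_mul_le {a b m : ℝ} (hm : 0 < m) (hma : m ≤ a) (hmb : m ≤ b) :
    (a / (a + b) - 1 / 2) ^ 2 * m ≤ a * b / (a + b) := by
  have hab : 0 < a + b := by linarith
  have hsq : (a / (a + b) - 1 / 2) ^ 2 * m * (a + b) = (a - b) ^ 2 * m / (4 * (a + b)) := by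
    field_simp
    ring
  rw [le_div_iff₀ hab, hsq, div_le_iff₀ (by positivity)]
  -- `(a - b)² m ≤ max(a, b)² min(a, b) ≤ 4 a b (a + b)`
  nlinarith [mul_le_mul_of_nonneg_left hmb (sq_nonneg a), mul_le_mul_of_nonneg_left hma (sq_nonneg b),
    mul_nonneg (mul_nonneg (hm.le.trans hma) (hm.le.trans hmb)) hm.le]

theorem log_sqrt_mul_sqrt_div {a b v c δ : ℝ} (r : ℝ) (ha : 0 ≤ a) (hb : 0 ≤ b) (hv : 0 ≤ v)
    (hc : 0 ≤ c) (hδ : 0 ≤ δ) :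
    log (√a * √b / (√v * c * δ ^ (r / 2))) = log (a * b / v / (c ^ 2 * δ ^ r)) / 2 := by
  have hrpow : δ ^ (r / 2) = √(δ ^ r) := by
    rw [sqrt_eq_rpow, ← rpow_mul hδ]
    ring_nf
  rw [← log_sqrt (by positivity), sqrt_div' _ (by positivity), sqrt_div' _ hv, sqrt_mul ha,
    sqrt_mul (sq_nonneg c), sqrt_sq hc, hrpow]
  congr 1
  ring

theorem nonneg_and_mul_exp_lt {lam A C τ : ℝ} (hlam : 0 < lam) (hC : 0 < C) (hCA : C ≤ A)
    (hτ : 1 / lam * (log (A / C) / 2) < τ) : 0 ≤ τ ∧ A * exp (-(2 * lam) * τ) < C := by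
  have hlog : log (A / C) < 2 * lam * τ := by
    rw [one_div, inv_mul_lt_iff₀ hlam] at hτ
    linarith
  refine ⟨?_, ?_⟩
  · nlinarith [log_nonneg ((one_le_div hC).2 hCA)]
  · rw [log_lt_iff_lt_exp (div_pos (hC.trans_le hCA) hC), div_lt_iff₀ hC] at hlog
    rw [neg_mul, exp_neg, ← div_eq_mul_inv, div_lt_iff₀ (exp_pos _)]
    linarith

theorem threshold_of_sq_sub_lt {x R : ℝ} (h : (x - R) ^ 2 < (R - 1 / 2) ^ 2) :
    (1 / 2 < R → 1 / 2 ≤ x) ∧ (R < 1 / 2 → x < 1 / 2) := by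
  constructor <;> intro hR <;> nlinarith

theorem stmt_16_general {V : Type*} [Fintype V] [Nonempty V] [DecidableEq V]
    (ω : V → V → ℝ) (hsym : ∀ i j, ω i j = ω j i)
    (d : V → ℝ) (hdpos : ∀ i, 0 < d i)
    (r : ℝ) (hr : r ∈ Set.Icc (0 : ℝ) 1)
    (lam2 : ℝ) (hlam2pos : 0 < lam2)
    (hvar : ∀ w : V → ℝ, (∑ i, d i ^ r * w i) = 0 →
      lam2 * (∑ i, d i ^ r * w i ^ 2) ≤ (1/2) * ∑ i, ∑ j, ω i j * (w i - w j) ^ 2)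
    (S : Finset V) (hS : S.Nonempty) (hSne : S ≠ univ)
    (u : ℝ → V → ℝ) (hu0 : u 0 = chi S)
    (hode : ∀ (t : ℝ) (i : V), HasDerivAt (fun s => u s i)
      (-(d i ^ (-r) * ∑ j, ω i j * (u t i - u t j))) t)
    (RS : ℝ) (hRS : RS = (∑ i ∈ S, d i ^ r) / (∑ i, d i ^ r))
    (hRSne : RS ≠ 1/2)
    (τ : ℝ)
    (hτ : (1/lam2) * Real.log
        (Real.sqrt (∑ i ∈ S, d i ^ r) * Real.sqrt (∑ i ∈ Sᶜ, d i ^ r) /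
          (Real.sqrt (∑ i, d i ^ r) * |RS - 1/2| *
            (univ.inf' univ_nonempty d) ^ (r/2))) < τ) :
    (1/2 < RS → ∀ i, 1/2 ≤ u τ i) ∧ (RS < 1/2 → ∀ i, u τ i < 1/2) := by
  rw [← sum_add_sum_compl S] at hRS hτ
  set a := ∑ i ∈ S, d i ^ r
  set b := ∑ i ∈ Sᶜ, d i ^ r
  set m := (univ.inf' univ_nonempty d) ^ r
  have hinf : 0 < univ.inf' univ_nonempty d := univ_inf'_pos hdpos
  have hm : 0 < m := rpow_pos_of_pos hinf r
  have hma : m ≤ a := rpow_inf'_le_sum hdpos hr.1 hS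
  have hmb : m ≤ b := rpow_inf'_le_sum hdpos hr.1
    (nonempty_iff_ne_empty.2 (by rwa [Ne, compl_eq_empty_iff]))
  have hab : 0 < a + b := by linarith
  have hmass : ∑ i, d i ^ r * (u 0 i - RS) = 0 := by
    rw [hu0, hRS]
    exact sum_mul_chi_sub_div_eq_zero _ S hab.ne'
  have hE0 : ∑ i, d i ^ r * (u 0 i - RS) ^ 2 = a * b / (a + b) := by
    rw [hu0, sum_mul_chi_sub_sq, hRS, mul_one_sub_div_sq_add_mul_div_sq hab.ne']
  rw [log_sqrt_mul_sqrt_div r (by linarith) (by linarith) hab.le (abs_nonneg _) hinf.le] at hτ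
  have hthreshold : |RS - 1/2| ^ 2 * m ≤ a * b / (a + b) := by
    rw [sq_abs, hRS]
    exact div_add_sub_half_sq_mul_le hm hma hmb
  obtain ⟨hτ0, hdecay⟩ :=
    nonneg_and_mul_exp_lt hlam2pos (mul_pos (pow_pos (abs_pos.2 (sub_ne_zero.2 hRSne)) 2) hm) hthreshold hτ
  have henergy : ∑ i, d i ^ r * (u τ i - RS) ^ 2 < |RS - 1/2| ^ 2 * m :=
    (hE0 ▸ (IsHeatFlow.sub_const hode RS).energy_le_mul_exp hsym hdpos hvar hmass hτ0).trans_lt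
      hdecay
  have hpt i := threshold_of_sq_sub_lt
    ((sq_abs (RS - 1/2)).subst (sq_lt_of_sum_rpow_mul_sq_lt hdpos hr.1 henergy i))
  exact ⟨fun h i => (hpt i).1 h, fun h i => (hpt i).2 h⟩

/-- Trivial MBO dynamics for large `τ`: on a connected graph (spectral gap
`λ₂ > 0`, variational characterization), with `R_S = vol S / vol V ≠ 1/2`, if
`τ > (1/λ₂) log( √(vol S) √(vol Sᶜ) / (√(vol V) |R_S - 1/2| d₋^{r/2}) )`, then
thresholding `e^{-τΔ}χ_S` at `1/2` yields `χ_V` when `R_S > 1/2` and `0` when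
`R_S < 1/2`. -/
theorem stmt_16 {V : Type*} [Fintype V] [Nonempty V] [DecidableEq V]
    (ω : V → V → ℝ) (hsym : ∀ i j, ω i j = ω j i) (hnonneg : ∀ i j, 0 ≤ ω i j)
    (d : V → ℝ) (hd : ∀ i, d i = ∑ j, ω i j) (hdpos : ∀ i, 0 < d i)
    (r : ℝ) (hr : r ∈ Set.Icc (0 : ℝ) 1)
    (lam2 : ℝ) (hlam2pos : 0 < lam2)
    (hvar : ∀ w : V → ℝ, (∑ i, d i ^ r * w i) = 0 →
      lam2 * (∑ i, d i ^ r * w i ^ 2) ≤ (1/2) * ∑ i, ∑ j, ω i j * (w i - w j) ^ 2)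
    (S : Finset V) (hS : S.Nonempty) (hSne : S ≠ univ)
    (u : ℝ → V → ℝ) (hu0 : u 0 = chi S)
    (hode : ∀ (t : ℝ) (i : V), HasDerivAt (fun s => u s i)
      (-(d i ^ (-r) * ∑ j, ω i j * (u t i - u t j))) t)
    (RS : ℝ) (hRS : RS = (∑ i ∈ S, d i ^ r) / (∑ i, d i ^ r))
    (hRSne : RS ≠ 1/2)
    (τ : ℝ)
    (hτ : (1/lam2) * Real.log
        (Real.sqrt (∑ i ∈ S, d i ^ r) * Real.sqrt (∑ i ∈ Sᶜ, d i ^ r) /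
          (Real.sqrt (∑ i, d i ^ r) * |RS - 1/2| *
            (univ.inf' univ_nonempty d) ^ (r/2))) < τ) :
    (1/2 < RS → ∀ i, 1/2 ≤ u τ i) ∧ (RS < 1/2 → ∀ i, u τ i < 1/2) :=
  stmt_16_general ω hsym d hdpos r hr lam2 hlam2pos hvar S hS hSne u hu0 hode RS hRS hRSne τ hτ
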